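/- arXiv:math/0404491 — 3 statements merged into one kernel-verified Lean document; each statement's English description precedes it below -/
import Mathlib

section
/- Define a map P : ℕ × ℕ → ℤ[u] by: P(0, t) = 0 for all t; P(s, 0) = 1 + u + ⋯ + u^{s−1} for s ≥ 1; P(s, t) = u^{t−1}(u^s − 1) if 1 ≤ s ≤ t; and P(s, t) = u^{t}(u^{s−1} + 1) if s > t ≥ 1. Then the map (s, t) ↦ (P(s, t), P(t, s)) from ℕ × ℕ to ℤ[u] × ℤ[u] is injective. -/
open Polynomial

/-- The virtual Poincaré polynomial of the affine quadric
`{(x,y) ∈ ℝˢ × ℝᵗ : Σ xᵢ² − Σ yⱼ² = 1}`: `P 0 t = 0`; `P s 0 = 1 + u + ⋯ + u^{s−1}` for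
`s ≥ 1`; `P s t = u^{t−1}(uˢ − 1)` if `1 ≤ s ≤ t`; `P s t = uᵗ(u^{s−1} + 1)` if `s > t ≥ 1`. -/
noncomputable def P (s t : ℕ) : Polynomial ℤ :=
  if s = 0 then 0
  else if t = 0 then ∑ i ∈ Finset.range s, X ^ i
  else if s ≤ t then X ^ (t - 1) * (X ^ s - 1)
  else X ^ t * (X ^ (s - 1) + 1)

noncomputable def decode (p q : Polynomial ℤ) : ℕ × ℕ :=
  if p = 0 then (0, (q.eval 1).toNat)
  else if q = 0 then ((p.eval 1).toNat, 0)
  else if p.eval 1 = 0 then (p.natDegree - p.natTrailingDegree, p.natTrailingDegree + 1)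
  else (p.natDegree - p.natTrailingDegree + 1, p.natTrailingDegree)

lemma sum_ne (s : ℕ) (hs : s ≠ 0) : (∑ i ∈ Finset.range s, (X:Polynomial ℤ) ^ i) ≠ 0 := by
  intro h
  have := congrArg (fun p => Polynomial.eval (1:ℤ) p) h
  simp [eval_finset_sum] at this
  exact hs this

lemma subone_ne (s : ℕ) (hs : s ≠ 0) : ((X:Polynomial ℤ) ^ s - 1) ≠ 0 := by
  intro h
  have := congrArg (fun p => Polynomial.eval (0:ℤ) p) h
  simp [zero_pow hs] at this

lemma addone_ne (s : ℕ) : ((X:Polynomial ℤ) ^ s + 1) ≠ 0 := by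
  intro h
  have := congrArg (fun p => Polynomial.eval (1:ℤ) p) h
  simp at this

lemma P_ne (s t : ℕ) (hs : s ≠ 0) : P s t ≠ 0 := by
  unfold P
  rcases eq_or_ne t 0 with ht | ht
  · simp [hs, ht, sum_ne s hs]
  · rcases le_or_gt s t with h | h
    · simp only [if_neg hs, if_neg ht, if_pos h]
      exact mul_ne_zero (pow_ne_zero _ X_ne_zero) (subone_ne s hs)
    · simp only [if_neg hs, if_neg ht, if_neg (not_le.2 h)]
      exact mul_ne_zero (pow_ne_zero _ X_ne_zero) (addone_ne _)

lemma decode_P (s t : ℕ) : decode (P s t) (P t s) = (s, t) := by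
  rcases eq_or_ne s 0 with hs | hs
  · rcases eq_or_ne t 0 with ht | ht
    · simp [hs, ht, decode, P]
    · have : P t s = ∑ i ∈ Finset.range t, X ^ i := by simp [P, ht, hs]
      simp [decode, hs, P, this, eval_finset_sum, ht]
  · rcases eq_or_ne t 0 with ht | ht
    · have h1 : P s t = ∑ i ∈ Finset.range s, X ^ i := by simp [P, hs, ht]
      have h2 : P t s = 0 := by simp [P, ht]
      rw [decode, if_neg (h1 ▸ sum_ne s hs), h2, if_pos rfl, h1]
      simp [eval_finset_sum, ht]
    · -- both ≥ 1
      have hq : P t s ≠ 0 := P_ne t s ht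
      rcases le_or_gt s t with h | h
      · have h1 : P s t = X ^ (t - 1) * (X ^ s - 1) := by simp [P, hs, ht, h]
        have hpne : P s t ≠ 0 := P_ne s t hs
        have he : (P s t).eval 1 = 0 := by simp [h1]
        have hd : (P s t).natDegree = t - 1 + s := by
          rw [h1, natDegree_mul (pow_ne_zero _ X_ne_zero) (subone_ne s hs),
            natDegree_X_pow]
          congr 1
          have : ((X:Polynomial ℤ) ^ s - 1) = X ^ s - C 1 := by simp
          rw [this, natDegree_X_pow_sub_C]
        have htr : (P s t).natTrailingDegree = t - 1 := by
          rw [h1, natTrailingDegree_mul (pow_ne_zero _ X_ne_zero) (subone_ne s hs),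
            natTrailingDegree_X_pow]
          have : ((X:Polynomial ℤ) ^ s - 1).natTrailingDegree = 0 := by
            rw [natTrailingDegree_eq_zero]
            right
            simp [coeff_sub, coeff_X_pow, Ne.symm hs]
          omega
        rw [decode, if_neg hpne, if_neg hq, if_pos he, hd, htr]
        ext <;> simp <;> omega
      · have h1 : P s t = X ^ t * (X ^ (s - 1) + 1) := by
          simp [P, hs, ht, not_le.2 h]
        have hpne : P s t ≠ 0 := P_ne s t hs
        have he : (P s t).eval 1 ≠ 0 := by simp [h1]
        have hd : (P s t).natDegree = t + (s - 1) := by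
          rw [h1, natDegree_mul (pow_ne_zero _ X_ne_zero) (addone_ne _),
            natDegree_X_pow]
          congr 1
          have : ((X:Polynomial ℤ) ^ (s-1) + 1) = X ^ (s-1) + C 1 := by simp
          rw [this, natDegree_X_pow_add_C]
        have htr : (P s t).natTrailingDegree = t := by
          rw [h1, natTrailingDegree_mul (pow_ne_zero _ X_ne_zero) (addone_ne _),
            natTrailingDegree_X_pow]
          have hone : ((X:Polynomial ℤ) ^ (s-1) + 1).natTrailingDegree = 0 := by
            rw [natTrailingDegree_eq_zero]
            right
            have : s - 1 ≠ 0 := by omega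
            simp [coeff_add, coeff_X_pow, Ne.symm this]
          omega
        rw [decode, if_neg hpne, if_neg hq, if_neg he, hd, htr]
        ext <;> simp <;> omega

/-- The map `(s, t) ↦ (P(s, t), P(t, s))` from `ℕ × ℕ` to `ℤ[u] × ℤ[u]` is injective. -/
theorem P_pair_injective :
    Function.Injective (fun p : ℕ × ℕ => (P p.1 p.2, P p.2 p.1)) := by
  intro ⟨s, t⟩ ⟨s', t'⟩ h
  have h1 := congrArg (fun q : Polynomial ℤ × Polynomial ℤ => decode q.1 q.2) h
  simpa [decode_P] using h1
end

section
/- Let m ≥ 1 and M ≥ 1 be integers. (a) If (x,y) ∈ ℝ^m × ℝ^M is nonzero and satisfies Σ_{i=1}^m x_i² = Σ_{j=1}^M y_j², then x ≠ 0; hence the assignment [x : y] ↦ [x] gives a well-defined map π from Z_{m,M} to the real projective space P^{m−1}(ℝ). (b) The map π is continuous and surjective. (c) For every point p ∈ P^{m−1}(ℝ), the fiber π^{−1}(p) is homeomorphic to the sphere S^{M−1}. -/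
open Metric LinearAlgebra.Projectivization

/-- The quotient topology on a real projectivization. -/
instance projectivizationTopology {V : Type*} [AddCommGroup V] [Module ℝ V]
    [TopologicalSpace V] : TopologicalSpace (Projectivization ℝ V) :=
  inferInstanceAs (TopologicalSpace (Quotient (projectivizationSetoid ℝ V)))

/-! The quotient map `V ∖ {0} → ℙ(V)` is the quotient by the scaling action of `ℝˣ`, hence
open, and an open quotient map stays a quotient map after restriction to the preimage of any
subset; so continuity of maps out of the quadric and out of its fibers can be checked on
representatives. The fiber over `[u]` consists of the points `[u : ‖u‖ • y]` with `‖y‖ = 1`,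
and `y` is recovered from any representative `(x, y')` as `(‖u‖ / ⟪u, x⟫) • y'`, continuously
since `⟪u, x⟫ ≠ 0`. -/

open scoped RealInnerProductSpace

namespace Projectivization

variable {V : Type*} [AddCommGroup V] [Module ℝ V]

lemma preimage_image_mk' (U : Set {v : V // v ≠ 0}) :
    mk' ℝ ⁻¹' (mk' ℝ '' U) =
      ⋃ a : ℝˣ, (fun v : {v : V // v ≠ 0} => (⟨(a : ℝ) • v.1, smul_ne_zero a.ne_zero v.2⟩ :
        {v : V // v ≠ 0})) ⁻¹' U := by
  ext v
  simp only [Set.mem_preimage, Set.mem_image, Set.mem_iUnion, mk'_eq_mk, mk_eq_mk_iff]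
  constructor
  · rintro ⟨w, hw, a, ha⟩
    exact ⟨a, by convert hw using 1; exact Subtype.ext ha⟩
  · rintro ⟨a, ha⟩
    exact ⟨_, ha, a, rfl⟩

theorem isOpenQuotientMap_mk' [TopologicalSpace V] [ContinuousConstSMul ℝ V] :
    IsOpenQuotientMap (mk' ℝ : {v : V // v ≠ 0} → ℙ ℝ V) := by
  refine ⟨Quotient.mk''_surjective, continuous_quot_mk, fun U hU => ?_⟩
  refine isOpen_coinduced.2 ?_
  change IsOpen (mk' ℝ ⁻¹' (mk' ℝ '' U))
  rw [preimage_image_mk']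
  exact isOpen_iUnion fun a =>
    hU.preimage (((continuous_const_smul _).comp continuous_subtype_val).subtype_mk _)

end Projectivization

open Projectivization

section Quadric

variable {E F : Type*} [NormedAddCommGroup E] [NormedAddCommGroup F]

lemma fst_ne_zero_of_norm_eq {v : E × F} (hv : v ≠ 0) (h : ‖v.1‖ = ‖v.2‖) : v.1 ≠ 0 := by
  intro h₁
  rw [h₁, norm_zero, eq_comm, norm_eq_zero] at h
  exact hv (Prod.ext h₁ h)

variable (E F) [NormedSpace ℝ E] [NormedSpace ℝ F]

noncomputable def quadric : Set (ℙ ℝ (E × F)) := {p | ‖p.rep.1‖ = ‖p.rep.2‖}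

variable {E F}

lemma mk_mem_quadric_iff {v : E × F} (hv : v ≠ 0) : mk ℝ v hv ∈ quadric E F ↔ ‖v.1‖ = ‖v.2‖ := by
  obtain ⟨a, ha⟩ := exists_smul_eq_mk_rep ℝ v hv
  simp only [quadric, Set.mem_ofPred_eq, ← ha, Prod.smul_fst, Prod.smul_snd, Units.smul_def,
    norm_smul]
  exact mul_right_inj' (norm_ne_zero_iff.2 a.ne_zero)

lemma fst_ne_zero_of_mk_mem_quadric {v : E × F} (hv : v ≠ 0) (hZ : mk ℝ v hv ∈ quadric E F) :
    v.1 ≠ 0 :=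
  fst_ne_zero_of_norm_eq hv ((mk_mem_quadric_iff hv).1 hZ)

lemma rep_fst_ne_zero (p : quadric E F) : p.1.rep.1 ≠ 0 :=
  fst_ne_zero_of_norm_eq p.1.rep_nonzero p.2

noncomputable def quadricProj (p : quadric E F) : ℙ ℝ E := mk ℝ p.1.rep.1 (rep_fst_ne_zero p)

lemma quadricProj_mk {v : E × F} (hv : v ≠ 0) (hv₁ : v.1 ≠ 0) (hZ : mk ℝ v hv ∈ quadric E F) :
    quadricProj ⟨mk ℝ v hv, hZ⟩ = mk ℝ v.1 hv₁ := by
  obtain ⟨a, ha⟩ := exists_smul_eq_mk_rep ℝ v hv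
  exact (mk_eq_mk_iff ℝ _ _ _ _).2 ⟨a, by rw [← ha]; rfl⟩

theorem continuous_quadricProj : Continuous (quadricProj : quadric E F → ℙ ℝ E) := by
  have hlift : quadricProj ∘ (quadric E F).restrictPreimage (mk' ℝ) = fun v =>
      mk ℝ v.1.1.1 (fst_ne_zero_of_mk_mem_quadric v.1.2 v.2) :=
    funext fun v => quadricProj_mk v.1.2 _ v.2
  rw [← (isOpenQuotientMap_mk'.restrictPreimage _).continuous_comp_iff, hlift]
  exact continuous_quot_mk.comp
    ((continuous_fst.comp (continuous_subtype_val.comp continuous_subtype_val)).subtype_mk _)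

theorem quadricProj_surjective [Nontrivial F] :
    Function.Surjective (quadricProj : quadric E F → ℙ ℝ E) := by
  intro p
  induction p using Projectivization.ind with | h x hx => ?_
  obtain ⟨y, hy⟩ := exists_norm_eq F (norm_nonneg x)
  have h0 : (x, y) ≠ 0 := fun h => hx (congrArg Prod.fst h)
  exact ⟨⟨mk ℝ (x, y) h0, (mk_mem_quadric_iff h0).2 hy.symm⟩, quadricProj_mk h0 hx _⟩

end Quadric

section Fiber

variable {E F : Type*} [NormedAddCommGroup E] [InnerProductSpace ℝ E] [NormedAddCommGroup F]
  [NormedSpace ℝ F] (u : E)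

noncomputable def sphereCoord (v : E × F) : F := (‖u‖ / ⟪u, v.1⟫) • v.2

lemma sphereCoord_smul {a : ℝ} (ha : a ≠ 0) (v : E × F) :
    sphereCoord u (a • v) = sphereCoord u v := by
  simp only [sphereCoord, Prod.smul_fst, Prod.smul_snd, inner_smul_right, smul_smul]
  rw [div_mul_eq_mul_div, mul_comm _ a, mul_div_mul_left _ _ ha]

lemma sphereCoord_rep_mk {v : E × F} (hv : v ≠ 0) :
    sphereCoord u (mk ℝ v hv).rep = sphereCoord u v := by
  obtain ⟨a, ha⟩ := exists_smul_eq_mk_rep ℝ v hv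
  rw [← ha, Units.smul_def, sphereCoord_smul u a.ne_zero]

lemma sphereCoord_self_smul (hu : u ≠ 0) (y : F) : sphereCoord u (u, ‖u‖ • y) = y := by
  have : ‖u‖ ≠ 0 := norm_ne_zero_iff.2 hu
  rw [sphereCoord, real_inner_self_eq_norm_sq, smul_smul,
    show ‖u‖ / ‖u‖ ^ 2 * ‖u‖ = 1 by field_simp, one_smul]

lemma inner_ne_zero_of_mk_eq {x : E} (hx : x ≠ 0) (hu : u ≠ 0) (h : mk ℝ x hx = mk ℝ u hu) :
    ⟪u, x⟫ ≠ 0 := by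
  obtain ⟨a, rfl⟩ := (mk_eq_mk_iff ℝ _ _ _ _).1 h
  rw [Units.smul_def, inner_smul_right, real_inner_self_eq_norm_sq]
  exact mul_ne_zero a.ne_zero (pow_ne_zero 2 (norm_ne_zero_iff.2 hu))

lemma exists_eq_mk_of_quadricProj_eq (hu : u ≠ 0) {p : quadric E F}
    (hp : quadricProj p = mk ℝ u hu) :
    ∃ y : F, ‖y‖ = 1 ∧ p.1 = mk ℝ (u, ‖u‖ • y) (fun h => hu (congrArg Prod.fst h)) := by
  obtain ⟨a, ha⟩ := (mk_eq_mk_iff ℝ _ _ _ _).1 hp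
  rw [Units.smul_def] at ha
  have hau : a * ‖u‖ ≠ 0 := mul_ne_zero a.ne_zero (norm_ne_zero_iff.2 hu)
  have hnorm : ‖p.1.rep.2‖ = ‖(a : ℝ) * ‖u‖‖ := by
    rw [← (p.2 : ‖p.1.rep.1‖ = ‖p.1.rep.2‖), ← ha, norm_smul, norm_mul, norm_norm]
  refine ⟨(a * ‖u‖)⁻¹ • p.1.rep.2, ?_, ?_⟩
  · rw [norm_smul, norm_inv, hnorm, inv_mul_cancel₀ (norm_ne_zero_iff.2 hau)]
  · conv_lhs => rw [← mk_rep p.1]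
    refine (mk_eq_mk_iff ℝ _ _ _ _).2 ⟨a, ?_⟩
    rw [Units.smul_def, Prod.smul_mk, smul_smul, smul_smul, mul_inv_cancel₀ hau,
      one_smul, ha]

noncomputable def fiberHomeomorph (hu : u ≠ 0) :
    (quadricProj ⁻¹' {mk ℝ u hu} : Set (quadric E F)) ≃ₜ sphere (0 : F) 1 where
  toFun p := ⟨sphereCoord u p.1.1.rep, by
    obtain ⟨y, hy, hp⟩ := exists_eq_mk_of_quadricProj_eq u hu p.2
    rw [hp, sphereCoord_rep_mk, sphereCoord_self_smul u hu, mem_sphere_zero_iff_norm, hy]⟩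
  invFun y := ⟨⟨mk ℝ (u, ‖u‖ • y.1) (fun h => hu (congrArg Prod.fst h)), by
    rw [mk_mem_quadric_iff, norm_smul, norm_norm, mem_sphere_zero_iff_norm.1 y.2, mul_one]⟩,
    quadricProj_mk _ hu _⟩
  left_inv p := by
    obtain ⟨y, -, hp⟩ := exists_eq_mk_of_quadricProj_eq u hu p.2
    ext : 2
    simp only [hp, sphereCoord_rep_mk, sphereCoord_self_smul u hu]
  right_inv y := Subtype.ext (by simp only [sphereCoord_rep_mk, sphereCoord_self_smul u hu])
  continuous_toFun := by
    rw [← ((isOpenQuotientMap_mk'.restrictPreimage _).restrictPreimage _).continuous_comp_iff]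
    refine continuous_induced_rng.2 ?_
    refine Continuous.congr ?_ fun w => (sphereCoord_rep_mk u w.1.1.2).symm
    refine (continuous_const.div (continuous_const.inner (continuous_fst.comp ?_)) fun w => ?_).smul
      (continuous_snd.comp ?_)
    · fun_prop
    · have hx := fst_ne_zero_of_mk_mem_quadric w.1.1.2 w.1.2
      exact inner_ne_zero_of_mk_eq u hx hu ((quadricProj_mk w.1.1.2 hx w.1.2).symm.trans w.2)
    · fun_prop
  continuous_invFun := by
    have hv : Continuous fun y : sphere (0 : F) 1 =>
        (⟨(u, ‖u‖ • y.1), fun h => hu (congrArg Prod.fst h)⟩ : {v : E × F // v ≠ 0}) :=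
      (continuous_const.prodMk (continuous_subtype_val.const_smul _)).subtype_mk _
    exact ((isOpenQuotientMap_mk'.continuous.comp hv).subtype_mk _).subtype_mk _

end Fiber

lemma EuclideanSpace.sum_sq_eq_sum_sq_iff {ι κ : Type*} [Fintype ι] [Fintype κ]
    (x : EuclideanSpace ℝ ι) (y : EuclideanSpace ℝ κ) :
    ∑ i, x i ^ 2 = ∑ j, y j ^ 2 ↔ ‖x‖ = ‖y‖ := by
  rw [← EuclideanSpace.real_norm_sq_eq, ← EuclideanSpace.real_norm_sq_eq,
    sq_eq_sq₀ (norm_nonneg _) (norm_nonneg _)]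

theorem Z_sphere_fibration_general (m M : ℕ) (hM : 1 ≤ M) :
    (∀ (x : EuclideanSpace ℝ (Fin m)) (y : EuclideanSpace ℝ (Fin M)),
      (x, y) ≠ (0 : EuclideanSpace ℝ (Fin m) × EuclideanSpace ℝ (Fin M)) →
      ∑ i, x i ^ 2 = ∑ j, y j ^ 2 → x ≠ 0) ∧
    ∃ π : {p : ℙ ℝ (EuclideanSpace ℝ (Fin m) × EuclideanSpace ℝ (Fin M)) |
            ∑ i, p.rep.1 i ^ 2 = ∑ j, p.rep.2 j ^ 2} → ℙ ℝ (EuclideanSpace ℝ (Fin m)),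
      (∀ (x : EuclideanSpace ℝ (Fin m)) (y : EuclideanSpace ℝ (Fin M))
        (h0 : (x, y) ≠ (0 : EuclideanSpace ℝ (Fin m) × EuclideanSpace ℝ (Fin M)))
        (hx : x ≠ 0)
        (hZ : Projectivization.mk ℝ (x, y) h0 ∈
          {p : ℙ ℝ (EuclideanSpace ℝ (Fin m) × EuclideanSpace ℝ (Fin M)) |
            ∑ i, p.rep.1 i ^ 2 = ∑ j, p.rep.2 j ^ 2}),
        π ⟨Projectivization.mk ℝ (x, y) h0, hZ⟩ = Projectivization.mk ℝ x hx) ∧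
      Continuous π ∧ Function.Surjective π ∧
      ∀ p : ℙ ℝ (EuclideanSpace ℝ (Fin m)),
        Nonempty ((π ⁻¹' {p}) ≃ₜ sphere (0 : EuclideanSpace ℝ (Fin M)) 1) := by
  have hquadric : {p : ℙ ℝ (EuclideanSpace ℝ (Fin m) × EuclideanSpace ℝ (Fin M)) |
      ∑ i, p.rep.1 i ^ 2 = ∑ j, p.rep.2 j ^ 2} = quadric _ _ :=
    Set.ext fun p => EuclideanSpace.sum_sq_eq_sum_sq_iff _ _
  have : Nonempty (Fin M) := ⟨⟨0, hM⟩⟩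
  refine ⟨fun x y h0 h => fst_ne_zero_of_norm_eq (v := (x, y)) h0
    ((EuclideanSpace.sum_sq_eq_sum_sq_iff x y).1 h), ?_⟩
  rw [hquadric]
  refine ⟨quadricProj, fun x y h0 hx hZ => quadricProj_mk h0 hx hZ, continuous_quadricProj,
    quadricProj_surjective, fun p => ?_⟩
  induction p using Projectivization.ind with | h u hu => exact ⟨fiberHomeomorph u hu⟩

/-- (a) A nonzero solution `(x,y)` of `Σ xᵢ² = Σ yⱼ²` has `x ≠ 0`, so `[x : y] ↦ [x]` gives a
well-defined map `π` from the projective quadric `Z_{m,M}` to `ℙ^{m−1}(ℝ)`; (b) `π` is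
continuous and surjective; (c) every fiber of `π` is homeomorphic to the sphere `S^{M−1}`. -/
theorem Z_sphere_fibration (m M : ℕ) (hm : 1 ≤ m) (hM : 1 ≤ M) :
    (∀ (x : EuclideanSpace ℝ (Fin m)) (y : EuclideanSpace ℝ (Fin M)),
      (x, y) ≠ (0 : EuclideanSpace ℝ (Fin m) × EuclideanSpace ℝ (Fin M)) →
      ∑ i, x i ^ 2 = ∑ j, y j ^ 2 → x ≠ 0) ∧
    ∃ π : {p : ℙ ℝ (EuclideanSpace ℝ (Fin m) × EuclideanSpace ℝ (Fin M)) |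
            ∑ i, p.rep.1 i ^ 2 = ∑ j, p.rep.2 j ^ 2} → ℙ ℝ (EuclideanSpace ℝ (Fin m)),
      (∀ (x : EuclideanSpace ℝ (Fin m)) (y : EuclideanSpace ℝ (Fin M))
        (h0 : (x, y) ≠ (0 : EuclideanSpace ℝ (Fin m) × EuclideanSpace ℝ (Fin M)))
        (hx : x ≠ 0)
        (hZ : Projectivization.mk ℝ (x, y) h0 ∈
          {p : ℙ ℝ (EuclideanSpace ℝ (Fin m) × EuclideanSpace ℝ (Fin M)) |
            ∑ i, p.rep.1 i ^ 2 = ∑ j, p.rep.2 j ^ 2}),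
        π ⟨Projectivization.mk ℝ (x, y) h0, hZ⟩ = Projectivization.mk ℝ x hx) ∧
      Continuous π ∧ Function.Surjective π ∧
      ∀ p : ℙ ℝ (EuclideanSpace ℝ (Fin m)),
        Nonempty ((π ⁻¹' {p}) ≃ₜ sphere (0 : EuclideanSpace ℝ (Fin M)) 1) :=
  Z_sphere_fibration_general m M hM
end

section
/- Let d ≥ 1 and s, t ≥ 0 be integers with s + t ≤ d, and let f : ℝ^d → ℝ be defined by f(x) = Σ_{i=1}^s x_i² − Σ_{j=1}^t x_{s+j}². For (a, b) ∈ ℝ^d × ℝ^d let γ_{a,b} denote the polynomial curve γ_{a,b}(t) = t·a + t²·b. Then the set A₂^{+1} = {(a,b) ∈ ℝ^d × ℝ^d : f(γ_{a,b}(t)) − t² is divisible by t³ as a polynomial in t}, equals {(a,b) ∈ ℝ^d × ℝ^d : Σ_{i=1}^s a_i² − Σ_{j=1}^t a_{s+j}² = 1}, and this set is homeomorphic to X^1_{s,t} × ℝ^{2d − s − t}. -/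
open Polynomial

/-- Homeomorph version of `Equiv.prodSubtypeFstEquivSubtypeProd`. -/
def prodSubtypeFstHomeo {α β : Type*} [TopologicalSpace α] [TopologicalSpace β] {p : α → Prop} :
    {s : α × β // p s.1} ≃ₜ {a // p a} × β where
  toEquiv := Equiv.prodSubtypeFstEquivSubtypeProd
  continuous_toFun := by
    refine Continuous.prodMk ?_ (continuous_snd.comp continuous_subtype_val)
    exact Continuous.subtype_mk (continuous_fst.comp continuous_subtype_val) _
  continuous_invFun := by
    refine Continuous.subtype_mk (Continuous.prodMk ?_ continuous_snd) _
    exact continuous_subtype_val.comp continuous_fst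

/-- For `f(x) = Σ_{i<s} xᵢ² − Σ_{j<t} x_{s+j}²` on `ℝᵈ`, the space `A₂⁺¹` of truncated arcs
`γ_{a,b}(t) = t·a + t²·b` with `f(γ_{a,b}(t)) = t² + O(t³)` is the set
`{(a,b) : Σ_{i<s} aᵢ² − Σ_{j<t} a_{s+j}² = 1}`, which is homeomorphic to
`X¹_{s,t} × ℝ^{2d−s−t}`. -/
theorem arc_space_plus_one (d s t : ℕ) (hd : 1 ≤ d) (hst : s + t ≤ d)
    (f : (Fin d → ℝ) → ℝ)
    (hf : ∀ x : Fin d → ℝ,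
      f x = ∑ i : Fin s, x (Fin.castLE (by omega) i) ^ 2 -
        ∑ j : Fin t, x ⟨s + (j : ℕ), by have := j.isLt; omega⟩ ^ 2)
    (Q : (Fin d → ℝ) → (Fin d → ℝ) → Polynomial ℝ)
    (hQ : ∀ (a b : Fin d → ℝ) (u : ℝ), (Q a b).eval u = f (u • a + u ^ 2 • b)) :
    {p : (Fin d → ℝ) × (Fin d → ℝ) | (X : Polynomial ℝ) ^ 3 ∣ Q p.1 p.2 - X ^ 2} =
      {p : (Fin d → ℝ) × (Fin d → ℝ) |
        ∑ i : Fin s, p.1 (Fin.castLE (by omega) i) ^ 2 -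
          ∑ j : Fin t, p.1 ⟨s + (j : ℕ), by have := j.isLt; omega⟩ ^ 2 = 1} ∧
    Nonempty
      ({p : (Fin d → ℝ) × (Fin d → ℝ) //
          ∑ i : Fin s, p.1 (Fin.castLE (by omega) i) ^ 2 -
            ∑ j : Fin t, p.1 ⟨s + (j : ℕ), by have := j.isLt; omega⟩ ^ 2 = 1} ≃ₜ
        ({q : (Fin s → ℝ) × (Fin t → ℝ) // ∑ i, q.1 i ^ 2 - ∑ j, q.2 j ^ 2 = 1} ×
          (Fin (2 * d - s - t) → ℝ))) := by
  constructor
  · -- set equality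
    ext ⟨a, b⟩
    simp only [Set.mem_setOf_eq]
    set ι1 : Fin s → Fin d := Fin.castLE (by omega) with hι1
    set ι2 : Fin t → Fin d := fun j => ⟨s + (j : ℕ), by have := j.isLt; omega⟩ with hι2
    set A : ℝ := ∑ i, a (ι1 i) ^ 2 - ∑ j, a (ι2 j) ^ 2 with hA
    set B : ℝ := ∑ i, a (ι1 i) * b (ι1 i) - ∑ j, a (ι2 j) * b (ι2 j) with hB
    set E : ℝ := ∑ i, b (ι1 i) ^ 2 - ∑ j, b (ι2 j) ^ 2 with hE
    have hQeq : Q a b = C A * X ^ 2 + C (2 * B) * X ^ 3 + C E * X ^ 4 := by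
      apply Polynomial.funext
      intro u
      rw [hQ, hf]
      simp only [Pi.add_apply, Pi.smul_apply, smul_eq_mul, eval_add, eval_mul, eval_C, eval_pow,
        eval_X]
      have h1 : ∀ (m : ℕ) (ι : Fin m → Fin d),
          ∑ i : Fin m, (u * a (ι i) + u ^ 2 * b (ι i)) ^ 2 =
            u ^ 2 * ∑ i, a (ι i) ^ 2 + 2 * u ^ 3 * ∑ i, a (ι i) * b (ι i) +
              u ^ 4 * ∑ i, b (ι i) ^ 2 := by
        intro m ι
        rw [Finset.mul_sum, Finset.mul_sum, Finset.mul_sum, ← Finset.sum_add_distrib,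
          ← Finset.sum_add_distrib]
        exact Finset.sum_congr rfl fun i _ => by ring
      rw [h1 s ι1, h1 t ι2, hA, hB, hE]
      ring
    rw [hQeq]
    have key : C A * X ^ 2 + C (2 * B) * X ^ 3 + C E * X ^ 4 - X ^ 2 =
        C (A - 1) * X ^ 2 + C (2 * B) * X ^ 3 + C E * X ^ 4 := by
      have hC : (C (A - 1) : ℝ[X]) = C A - 1 := by rw [map_sub, map_one]
      rw [hC]; ring
    rw [key, X_pow_dvd_iff]
    have hco : ∀ k, (C (A - 1) * X ^ 2 + C (2 * B) * X ^ 3 + C E * X ^ 4).coeff k =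
        (if k = 2 then A - 1 else 0) + (if k = 3 then 2 * B else 0) +
          (if k = 4 then E else 0) := by
      intro k
      rw [coeff_add, coeff_add, coeff_C_mul, coeff_C_mul, coeff_C_mul, coeff_X_pow, coeff_X_pow,
        coeff_X_pow]
      split_ifs <;> ring
    constructor
    · intro h
      have h2 := h 2 (by norm_num)
      rw [hco] at h2
      norm_num at h2
      linarith
    · intro h k hk
      rw [hco, h]
      interval_cases k <;> norm_num
  · -- homeomorphism
    set r := d - s - t with hr
    let e : (Fin s ⊕ (Fin t ⊕ Fin r)) ≃ Fin d :=
      (Equiv.sumCongr (Equiv.refl _) finSumFinEquiv).trans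
        (finSumFinEquiv.trans (finCongr (by omega)))
    let V := Fin d → ℝ
    let Fs := Fin s → ℝ
    let Ft := Fin t → ℝ
    let Fr := Fin r → ℝ
    let E : V ≃ₜ Fs × (Ft × Fr) :=
      (Homeomorph.piCongrLeft (Y := fun _ => ℝ) e).symm.trans
        (Homeomorph.sumArrowHomeomorphProdArrow.trans
          ((Homeomorph.refl Fs).prodCongr Homeomorph.sumArrowHomeomorphProdArrow))
    let H : V × V ≃ₜ (Fs × Ft) × (Fr × V) :=
      (E.prodCongr (Homeomorph.refl V)).trans <|
        (Homeomorph.prodAssoc _ _ _).trans <|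
          (((Homeomorph.refl Fs).prodCongr (Homeomorph.prodAssoc _ _ _)).trans
            (Homeomorph.prodAssoc _ _ _).symm)
    have hH1 : ∀ p : V × V, (H p).1.1 = fun i => p.1 (e (Sum.inl i)) := by
      intro p; rfl
    have hH2 : ∀ p : V × V, (H p).1.2 = fun j => p.1 (e (Sum.inr (Sum.inl j))) := by
      intro p; rfl
    have he1 : ∀ i : Fin s, e (Sum.inl i) = Fin.castLE (by omega : s ≤ d) i := by
      intro i; apply Fin.ext; simp [e]
    have he2 : ∀ j : Fin t, e (Sum.inr (Sum.inl j)) =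
        (⟨s + (j : ℕ), by have := j.isLt; omega⟩ : Fin d) := by
      intro j; apply Fin.ext; simp [e]
    have h_iff : ∀ p : V × V,
        (∑ i : Fin s, p.1 (Fin.castLE (by omega : s ≤ d) i) ^ 2 -
          ∑ j : Fin t, p.1 ⟨s + (j : ℕ), by have := j.isLt; omega⟩ ^ 2 = 1) ↔
        (∑ i, (H p).1.1 i ^ 2 - ∑ j, (H p).1.2 j ^ 2 = 1) := by
      intro p
      rw [hH1, hH2]
      simp only [he1, he2]
    let H3 : Fr × V ≃ₜ (Fin (2 * d - s - t) → ℝ) :=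
      Homeomorph.sumArrowHomeomorphProdArrow.symm.trans
        (Homeomorph.piCongrLeft (Y := fun _ => ℝ) (finSumFinEquiv.trans (finCongr (by omega))))
    exact ⟨(H.subtype h_iff).trans (prodSubtypeFstHomeo.trans
      ((Homeomorph.refl _).prodCongr H3))⟩
end
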